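/- arXiv:2605.28547 — 5 statements merged into one kernel-verified Lean document; each statement's English description precedes it below -/
import Mathlib

section
/- Let s : ℝ → ℂ be a Schwartz function whose Fourier transform ŝ has even power spectrum, i.e. |ŝ(f)|² = |ŝ(−f)|² for all f ∈ ℝ. Then the term C₀ = ∫_ℝ conj(s(t))·s'(t) dt equals 0. -/
open MeasureTheory Complex Real FourierTransform

/-- Multiplication formula (self-adjointness of the Fourier transform) on `ℝ`. -/
private lemma flip_formula (f g : ℝ → ℂ) (hf : Integrable f) (hg : Integrable g) :
    ∫ ξ : ℝ, 𝓕 f ξ * g ξ = ∫ x : ℝ, f x * 𝓕 g x := by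
  have hflip : (innerₗ ℝ).flip = innerₗ ℝ :=
    LinearMap.ext fun x => LinearMap.ext fun y => real_inner_comm x y
  have h := VectorFourier.integral_fourierIntegral_smul_eq_flip (L := innerₗ ℝ)
    Real.continuous_fourierChar continuous_inner hf hg
  rw [hflip] at h
  simp only [smul_eq_mul] at h
  exact h

/-- The Fourier transform of the conjugate is the conjugate of the reflected transform. -/
private lemma fourier_conj (h : ℝ → ℂ) (w : ℝ) :
    𝓕 (fun x => (starRingEnd ℂ) (h x)) w
      = (starRingEnd ℂ) (𝓕 h (-w)) := by
  rw [Real.fourier_real_eq_integral_exp_smul,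
    Real.fourier_real_eq_integral_exp_smul, ← integral_conj]
  congr 1
  ext x
  rw [smul_eq_mul, smul_eq_mul, map_mul, ← Complex.exp_conj, map_mul, Complex.conj_I,
    Complex.conj_ofReal]
  congr 2
  push_cast
  ring

/-- **Proposition 1.** If a Schwartz signal `s : ℝ → ℂ` has even power
spectrum, `|ŝ f|² = |ŝ (-f)|²` for all `f`, then `C₀ = ∫ conj (s t) * s' t dt = 0`. -/
theorem stmt2 (s : SchwartzMap ℝ ℂ)
    (hsym : ∀ f : ℝ, ‖FourierTransform.fourier (⇑s : ℝ → ℂ) f‖ ^ 2 =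
      ‖FourierTransform.fourier (⇑s : ℝ → ℂ) (-f)‖ ^ 2) :
    ∫ t : ℝ, (starRingEnd ℂ) (s t) * deriv s t = 0 := by
  set g : ℝ → ℂ := fun f => (starRingEnd ℂ) (𝓕 (⇑s) f) with hgdef
  have hsf : Integrable (𝓕 (⇑s)) := by
    simpa [SchwartzMap.fourier_coe] using (𝓕 s).integrable
  have hgint : Integrable g := by
    simpa using Complex.conjCLE.toContinuousLinearMap.integrable_comp hsf
  have hs' : Integrable (deriv (⇑s)) := by
    exact (SchwartzMap.derivCLM ℝ ℂ s).integrable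
  -- `𝓕 g = conj ∘ s` by Fourier inversion
  have h1 : ∀ t : ℝ, (starRingEnd ℂ) (s t) = 𝓕 g t := by
    intro t
    rw [hgdef, fourier_conj]
    congr 1
    rw [← Real.fourierInv_eq_fourier_neg]
    exact (MeasureTheory.Integrable.fourierInv_fourier_eq (s.integrable (μ := volume)) hsf s.continuous.continuousAt).symm
  have h2 : 𝓕 (deriv (⇑s))
      = fun x : ℝ => (2 * π * Complex.I * x) • 𝓕 (⇑s) x :=
    Real.fourier_deriv s.integrable s.differentiable hs'
  have hnormSq : ∀ f : ℝ, (Complex.normSq (𝓕 (⇑s) f) : ℝ)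
      = Complex.normSq (𝓕 (⇑s) (-f)) := by
    intro f
    rw [← Complex.sq_norm, ← Complex.sq_norm]
    exact hsym f
  set F : ℝ → ℂ := fun x => (x : ℂ) * (Complex.normSq (𝓕 (⇑s) x) : ℂ)
    with hFdef
  have hodd : ∀ x : ℝ, F (-x) = -F x := by
    intro x
    simp only [hFdef, Complex.ofReal_neg, hnormSq x]
    ring
  have hFzero : ∫ x : ℝ, F x = 0 := by
    have h3 : ∫ x : ℝ, F x = ∫ x : ℝ, F (-x) := (integral_neg_eq_self F volume).symm
    have h4 : ∫ x : ℝ, F (-x) = -∫ x : ℝ, F x := by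
      simp only [hodd]
      exact integral_neg F
    have h5 := h3.trans h4
    have h6 : (2 : ℂ) * ∫ x : ℝ, F x = 0 := by
      rw [two_mul]
      nth_rewrite 1 [h5]
      ring
    simpa using h6
  calc ∫ t : ℝ, (starRingEnd ℂ) (s t) * deriv (⇑s) t
      = ∫ t : ℝ, 𝓕 g t * deriv (⇑s) t := by
        simp_rw [← h1]
    _ = ∫ x : ℝ, g x * 𝓕 (deriv (⇑s)) x := flip_formula g _ hgint hs'
    _ = ∫ x : ℝ, (2 * π * Complex.I) * F x := by
        rw [h2]
        congr 1
        ext x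
        rw [hgdef, hFdef]
        simp only [smul_eq_mul]
        rw [show (starRingEnd ℂ) (𝓕 (⇑s) x) *
            (2 * ↑π * Complex.I * ↑x * 𝓕 (⇑s) x)
            = (2 * ↑π * Complex.I) * ((x : ℂ) *
              (𝓕 (⇑s) x * (starRingEnd ℂ) (𝓕 (⇑s) x)))
          by ring]
        rw [Complex.mul_conj]
    _ = (2 * π * Complex.I) * ∫ x : ℝ, F x := integral_const_mul _ _
    _ = 0 := by rw [hFzero, mul_zero]
end

section
/- Let p : ℝ → ℝ and ψ : ℝ → ℝ be differentiable, and define s : ℝ → ℂ by s(t) = p(t)·e^{iψ(t)}. Assume that t ↦ t·p(t)·p'(t) and t ↦ t·p(t)²·ψ'(t) are integrable on ℝ, that p(t)² = p(−t)² for all t (even power profile), and that ψ'(t) = ψ'(−t) for all t (even phase derivative). Then the imaginary part of ∫_ℝ t·conj(s'(t))·s(t) dt equals 0. -/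
open MeasureTheory Complex Real

lemma odd_integral_zero (f : ℝ → ℝ) (hodd : ∀ t, f (-t) = -f t) :
    (∫ t : ℝ, f t) = 0 := by
  have h := MeasureTheory.integral_neg_eq_self f (volume : Measure ℝ)
  simp only [hodd, integral_neg] at h
  linarith

/-- **Proposition 2, time domain.** For `s t = p t · exp (i ψ t)` with
`p, ψ : ℝ → ℝ` differentiable, if `t ↦ t · p t · p' t` and `t ↦ t · (p t)² · ψ' t` are
integrable, the power profile is even (`(p t)² = (p (-t))²`) and the phase derivative is
even (`ψ' t = ψ' (-t)`), then `Im (∫ t · conj (s' t) · s t dt) = 0`. -/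
theorem stmt4 (p ψ : ℝ → ℝ) (hp : Differentiable ℝ p) (hψ : Differentiable ℝ ψ)
    (s : ℝ → ℂ) (hs : ∀ t : ℝ, s t = (p t : ℂ) * Complex.exp (Complex.I * (ψ t : ℂ)))
    (h1 : Integrable (fun t : ℝ => t * p t * deriv p t))
    (h2 : Integrable (fun t : ℝ => t * (p t) ^ 2 * deriv ψ t))
    (hpeven : ∀ t : ℝ, (p t) ^ 2 = (p (-t)) ^ 2)
    (hψeven : ∀ t : ℝ, deriv ψ t = deriv ψ (-t)) :
    (∫ t : ℝ, (t : ℂ) * (starRingEnd ℂ) (deriv s t) * s t).im = 0 := by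
  have hs' : ∀ t : ℝ, deriv s t =
      ((Complex.ofReal (deriv p t)) + Complex.I * (Complex.ofReal (deriv ψ t)) * (Complex.ofReal (p t))) *
        Complex.exp (Complex.I * (Complex.ofReal (ψ t))) := by
    intro t
    have hfun : s = fun t : ℝ => (Complex.ofReal (p t)) * Complex.exp (Complex.I * (Complex.ofReal (ψ t))) :=
      funext hs
    rw [hfun]
    have hd1 : HasDerivAt (fun t : ℝ => (Complex.ofReal (p t))) (Complex.ofReal (deriv p t)) t :=
      ((hp t).hasDerivAt).ofReal_comp
    have hd2 : HasDerivAt (fun t : ℝ => Complex.exp (Complex.I * (Complex.ofReal (ψ t))))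
        (Complex.I * (Complex.ofReal (deriv ψ t)) * Complex.exp (Complex.I * (Complex.ofReal (ψ t)))) t := by
      have hψd : HasDerivAt (fun t : ℝ => Complex.I * (Complex.ofReal (ψ t)))
          (Complex.I * (Complex.ofReal (deriv ψ t))) t :=
        ((hψ t).hasDerivAt).ofReal_comp.const_mul Complex.I
      simpa [mul_comm] using hψd.cexp
    have := (hd1.mul hd2).deriv
    rw [show (fun t : ℝ => (Complex.ofReal (p t)) * Complex.exp (Complex.I * (Complex.ofReal (ψ t)))) = ((fun t : ℝ => (Complex.ofReal (p t))) * fun t : ℝ => Complex.exp (Complex.I * (Complex.ofReal (ψ t)))) from rfl, this]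
    ring
  have key : ∀ t : ℝ, (t : ℂ) * (starRingEnd ℂ) (deriv s t) * s t =
      ((t * p t * deriv p t : ℝ) : ℂ) - ((t * (p t) ^ 2 * deriv ψ t : ℝ) : ℂ) * Complex.I := by
    intro t
    rw [hs', hs t]
    have hE : (starRingEnd ℂ) (Complex.exp (Complex.I * (Complex.ofReal (ψ t)))) *
        Complex.exp (Complex.I * (Complex.ofReal (ψ t))) = 1 := by
      rw [← Complex.exp_conj, ← Complex.exp_add]
      simp [map_mul, Complex.conj_ofReal]
    calc (t : ℂ) * ((starRingEnd ℂ) (((Complex.ofReal (deriv p t)) + Complex.I * (Complex.ofReal (deriv ψ t)) * (Complex.ofReal (p t))) *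
            Complex.exp (Complex.I * (Complex.ofReal (ψ t))))) *
          ((Complex.ofReal (p t)) * Complex.exp (Complex.I * (Complex.ofReal (ψ t))))
        = (t : ℂ) * ((starRingEnd ℂ) ((Complex.ofReal (deriv p t)) + Complex.I * (Complex.ofReal (deriv ψ t)) * (Complex.ofReal (p t)))) *
            (Complex.ofReal (p t)) *
          ((starRingEnd ℂ) (Complex.exp (Complex.I * (Complex.ofReal (ψ t)))) *
            Complex.exp (Complex.I * (Complex.ofReal (ψ t)))) := by
          rw [map_mul]; ring
      _ = ((t * p t * deriv p t : ℝ) : ℂ) - ((t * (p t) ^ 2 * deriv ψ t : ℝ) : ℂ) * Complex.I := by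
          rw [hE, mul_one]
          simp only [map_add, map_mul, Complex.conj_ofReal, Complex.conj_I]
          push_cast
          ring
  have hInt : Integrable (fun t : ℝ =>
      ((t * p t * deriv p t : ℝ) : ℂ) - ((t * (p t) ^ 2 * deriv ψ t : ℝ) : ℂ) * Complex.I) :=
    (h1.ofReal (𝕜 := ℂ)).sub ((h2.ofReal (𝕜 := ℂ)).mul_const Complex.I)
  rw [integral_congr_ae (Filter.Eventually.of_forall key), ← RCLike.im_eq_complex_im, ← integral_im hInt]
  have him : (∫ t : ℝ, RCLike.im (((t * p t * deriv p t : ℝ) : ℂ)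
      - ((t * (p t) ^ 2 * deriv ψ t : ℝ) : ℂ) * Complex.I))
      = ∫ t : ℝ, -(t * (p t) ^ 2 * deriv ψ t) := by
    apply integral_congr_ae (Filter.Eventually.of_forall _)
    intro t
    rw [RCLike.im_eq_complex_im, Complex.sub_im, Complex.mul_I_im,
      Complex.ofReal_im, Complex.ofReal_re]
    ring
  rw [him, integral_neg]
  have hodd : (∫ t : ℝ, t * (p t) ^ 2 * deriv ψ t) = 0 := by
    apply odd_integral_zero
    intro t
    rw [← hpeven t, ← hψeven t]
    ring
  rw [hodd, neg_zero]
end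

section
/- Let (Ω, 𝔽, P) be a probability space, K and L positive natural numbers, and X : Fin L × Fin K → Ω → ℂ complex random variables such that all products X_{l,k}·conj(X_{l',k'}) are integrable and E[X_{l,k}·conj(X_{l',k'})] = P_X if (l,k) = (l',k') and 0 otherwise, for a constant P_X ≥ 0. Let T > 0, Δf > 0, T_s > 0, T₀ ∈ ℝ, and f₀ = Δf·(L−1)/2. Then for every f ∈ ℝ, E[ |∑_{k=0}^{K−1} ∑_{l=0}^{L−1} X_{l,k}·T·sinc((f+f₀)/Δf − l)·e^{−2πi f (k T_s − T₀)}|² ] = T²·K·P_X·∑_{l=0}^{L−1} sinc²((f+f₀)/Δf − l). -/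
open MeasureTheory Complex Real

/-- The normalized sinc function: `sinc x = sin (πx) / (πx)` for `x ≠ 0`, `sinc 0 = 1`. -/
noncomputable def sincn (x : ℝ) : ℝ := if x = 0 then 1 else Real.sin (π * x) / (π * x)

/-- **expected OFDM power spectrum.** If the data symbols `X_{l,k}` are
uncorrelated with `E[X_{l,k} conj X_{l',k'}] = P_X δ`, then the expected power spectrum of
the OFDM frame `S f = T ∑_{k,l} X_{l,k} sinc((f+f₀)/Δf − l) e^{−2πi f (k Tₛ − T₀)}` is
`T² K P_X ∑_l sinc²((f+f₀)/Δf − l)`. -/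
theorem stmt9 {Ω : Type*} [MeasureSpace Ω] [IsProbabilityMeasure (volume : Measure Ω)]
    (K L : ℕ) (hK : 0 < K) (hL : 0 < L)
    (X : Fin L × Fin K → Ω → ℂ) (PX : ℝ) (hPX : 0 ≤ PX)
    (hint : ∀ p q : Fin L × Fin K, Integrable (fun ω => X p ω * (starRingEnd ℂ) (X q ω)))
    (hcorr : ∀ p q : Fin L × Fin K,
      (∫ ω, X p ω * (starRingEnd ℂ) (X q ω)) = if p = q then (PX : ℂ) else 0)
    (T Δf Ts : ℝ) (hT : 0 < T) (hΔf : 0 < Δf) (hTs : 0 < Ts) (T₀ : ℝ)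
    (f₀ : ℝ) (hf₀ : f₀ = Δf * ((L : ℝ) - 1) / 2) (f : ℝ) :
    (∫ ω, (‖∑ k : Fin K, ∑ l : Fin L,
        X (l, k) ω * (T : ℂ) * ((sincn ((f + f₀) / Δf - (l : ℕ)) : ℝ) : ℂ) *
          Complex.exp (-2 * (π : ℂ) * Complex.I * (f : ℂ) *
            (((k : ℕ) : ℂ) * (Ts : ℂ) - (T₀ : ℂ)))‖ ^ 2 : ℝ)) =
      T ^ 2 * K * PX * ∑ l : Fin L, sincn ((f + f₀) / Δf - (l : ℕ)) ^ 2 := by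
  
  classical
  set s : Fin L → ℝ := fun l => sincn ((f + f₀) / Δf - (l : ℕ)) with hs
  set c : Fin L × Fin K → ℂ := fun p =>
    (T : ℂ) * ((s p.1 : ℝ) : ℂ) *
      Complex.exp (-2 * (π : ℂ) * Complex.I * (f : ℂ) *
        (((p.2 : ℕ) : ℂ) * (Ts : ℂ) - (T₀ : ℂ))) with hc
  -- the sum as a single sum over pairs
  have hSum : ∀ ω : Ω, (∑ k : Fin K, ∑ l : Fin L,
      X (l, k) ω * (T : ℂ) * ((s l : ℝ) : ℂ) *
        Complex.exp (-2 * (π : ℂ) * Complex.I * (f : ℂ) *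
          (((k : ℕ) : ℂ) * (Ts : ℂ) - (T₀ : ℂ))))
      = ∑ p : Fin L × Fin K, X p ω * c p := by
    intro ω
    rw [Fintype.sum_prod_type, Finset.sum_comm]
    refine Finset.sum_congr rfl fun k _ => Finset.sum_congr rfl fun l _ => ?_
    simp only [hc, hs]
    ring
  -- key: c p * conj (c p)
  have hconj : ∀ p : Fin L × Fin K, c p * (starRingEnd ℂ) (c p)
      = ((T ^ 2 * s p.1 ^ 2 : ℝ) : ℂ) := by
    intro p
    have hzc : (starRingEnd ℂ) (-2 * (π : ℂ) * Complex.I * (f : ℂ) *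
        (((p.2 : ℕ) : ℂ) * (Ts : ℂ) - (T₀ : ℂ)))
        = -(-2 * (π : ℂ) * Complex.I * (f : ℂ) *
        (((p.2 : ℕ) : ℂ) * (Ts : ℂ) - (T₀ : ℂ))) := by
      simp only [map_mul, map_neg, map_sub, map_ofNat, Complex.conj_I,
        Complex.conj_ofReal, Complex.conj_natCast]
      ring
    have hz : (starRingEnd ℂ) (Complex.exp (-2 * (π : ℂ) * Complex.I * (f : ℂ) *
        (((p.2 : ℕ) : ℂ) * (Ts : ℂ) - (T₀ : ℂ))))
        = Complex.exp (-(-2 * (π : ℂ) * Complex.I * (f : ℂ) *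
        (((p.2 : ℕ) : ℂ) * (Ts : ℂ) - (T₀ : ℂ)))) := by
      rw [← Complex.exp_conj, hzc]
    simp only [hc, map_mul, Complex.conj_ofReal, hz]
    rw [show ∀ a b e e' : ℂ, a * b * e * (a * b * e') = (a * b) ^ 2 * (e * e') by
      intros; ring]
    rw [← Complex.exp_add, add_neg_cancel, Complex.exp_zero]
    push_cast
    ring
  -- pointwise expansion of |·|²
  have hz : ∀ ω : Ω, ((‖∑ p : Fin L × Fin K, X p ω * c p‖) ^ 2 : ℝ)
      = Complex.re (∑ p : Fin L × Fin K, ∑ q : Fin L × Fin K,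
          (c p * (starRingEnd ℂ) (c q)) * (X p ω * (starRingEnd ℂ) (X q ω))) := by
    intro ω
    have h1 : ((‖∑ p : Fin L × Fin K, X p ω * c p‖) ^ 2 : ℝ)
        = ((∑ p : Fin L × Fin K, X p ω * c p) *
            (starRingEnd ℂ) (∑ p : Fin L × Fin K, X p ω * c p)).re := by
      rw [Complex.mul_conj]
      simp [Complex.sq_norm]
    rw [h1]
    congr 1
    rw [map_sum, Finset.sum_mul_sum]
    refine Finset.sum_congr rfl fun p _ => Finset.sum_congr rfl fun q _ => ?_
    simp only [map_mul]
    ring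
  -- integrability of the double sum
  have hintsum : Integrable (fun ω => ∑ p : Fin L × Fin K, ∑ q : Fin L × Fin K,
      (c p * (starRingEnd ℂ) (c q)) * (X p ω * (starRingEnd ℂ) (X q ω))) := by
    refine integrable_finset_sum _ fun p _ => integrable_finset_sum _ fun q _ => ?_
    exact (hint p q).const_mul _
  -- compute the complex integral
  have hI : (∫ ω, ∑ p : Fin L × Fin K, ∑ q : Fin L × Fin K,
      (c p * (starRingEnd ℂ) (c q)) * (X p ω * (starRingEnd ℂ) (X q ω)))
      = ((T ^ 2 * K * PX * ∑ l : Fin L, s l ^ 2 : ℝ) : ℂ) := by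
    rw [integral_finset_sum _ fun p _ => integrable_finset_sum _ fun q _ =>
      (hint p q).const_mul _]
    have : ∀ p : Fin L × Fin K, (∫ ω, ∑ q : Fin L × Fin K,
        (c p * (starRingEnd ℂ) (c q)) * (X p ω * (starRingEnd ℂ) (X q ω)))
        = ((T ^ 2 * s p.1 ^ 2 * PX : ℝ) : ℂ) := by
      intro p
      rw [integral_finset_sum _ fun q _ => (hint p q).const_mul _]
      have h2 : ∀ q : Fin L × Fin K, (∫ ω,
          (c p * (starRingEnd ℂ) (c q)) * (X p ω * (starRingEnd ℂ) (X q ω)))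
          = if p = q then (c p * (starRingEnd ℂ) (c q)) * (PX : ℂ) else 0 := by
        intro q
        rw [integral_const_mul, hcorr p q]
        split <;> simp
      rw [Finset.sum_congr rfl fun q _ => h2 q]
      rw [Finset.sum_ite_eq Finset.univ p
        (fun q => (c p * (starRingEnd ℂ) (c q)) * (PX : ℂ))]
      simp [hconj p]
    rw [Finset.sum_congr rfl fun p _ => this p, ← Complex.ofReal_sum]
    congr 1
    rw [Fintype.sum_prod_type]
    simp only [Finset.sum_const, Finset.card_univ, Fintype.card_fin, nsmul_eq_mul,
      Finset.mul_sum]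
    exact Finset.sum_congr rfl fun l _ => by ring
  simp only [hs] at hSum
  simp only [hSum, hz]
  have hre := integral_re (𝕜 := ℂ) hintsum
  simp only [RCLike.re_to_complex] at hre
  rw [hre, hI, Complex.ofReal_re]
end

section
/- Let T_c > 0 and 0 < α ≤ 1, and set f_L = (1−α)/(2T_c) and f_H = (1+α)/(2T_c). Define g : ℝ → ℝ by g(f) = T_c if |f| ≤ f_L; g(f) = (T_c/2)·(1 + cos((π T_c/α)·(|f| − f_L))) if f_L < |f| ≤ f_H; and g(f) = 0 otherwise. Then ∫_ℝ g(f) df = 1 and ∫_ℝ f²·g(f) df = (3α² + 1)/(12 T_c²) − 2α²/(π² T_c²). -/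
open MeasureTheory Real

/-- **RRC power spectrum.** For the normalized root-raised-cosine power
spectrum `g` with chip duration `T_c > 0` and roll-off `0 < α ≤ 1`, one has `∫ g = 1` and
`∫ f² g(f) df = (3α² + 1)/(12 T_c²) − 2α²/(π² T_c²)`. -/
theorem stmt17 (Tc α : ℝ) (hTc : 0 < Tc) (hα0 : 0 < α) (hα1 : α ≤ 1)
    (fL fH : ℝ) (hfL : fL = (1 - α) / (2 * Tc)) (hfH : fH = (1 + α) / (2 * Tc))
    (g : ℝ → ℝ)
    (hg : ∀ f : ℝ, g f =
      if |f| ≤ fL then Tc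
      else if |f| ≤ fH then (Tc / 2) * (1 + Real.cos ((π * Tc / α) * (|f| - fL)))
      else 0) :
    (∫ f : ℝ, g f) = 1 ∧
    (∫ f : ℝ, f ^ 2 * g f) = (3 * α ^ 2 + 1) / (12 * Tc ^ 2) - 2 * α ^ 2 / (π ^ 2 * Tc ^ 2) := by
  have hTc' : Tc ≠ 0 := hTc.ne'
  have hα' : α ≠ 0 := hα0.ne'
  have hπ : π ≠ 0 := Real.pi_ne_zero
  set k : ℝ := π * Tc / α with hk
  have hkpos : 0 < k := by rw [hk]; positivity
  have hk0 : k ≠ 0 := hkpos.ne'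
  have hfL0 : 0 ≤ fL := by
    rw [hfL]; apply div_nonneg (by linarith) (by linarith)
  have hfLH : fL ≤ fH := by
    rw [hfL, hfH]
    exact (div_le_div_iff_of_pos_right (by linarith)).mpr (by linarith)
  have hfH0 : 0 ≤ fH := le_trans hfL0 hfLH
  have hkπ : k * (fH - fL) = π := by
    rw [hk, hfL, hfH]; field_simp; ring
  -- EqOn descriptions of g on the three pieces
  have hM : Set.EqOn g (fun _ => Tc) (Set.uIcc (-fL) fL) := by
    intro f hf
    rw [Set.uIcc_of_le (by linarith)] at hf
    have : |f| ≤ fL := abs_le.mpr ⟨hf.1, hf.2⟩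
    simp [hg f, this]
  have hR : Set.EqOn g (fun f => (Tc / 2) * (1 + Real.cos (k * (f - fL)))) (Set.uIcc fL fH) := by
    intro f hf
    rw [Set.uIcc_of_le hfLH] at hf
    have habs : |f| = f := abs_of_nonneg (le_trans hfL0 hf.1)
    rw [hg f, habs]
    by_cases h1 : f ≤ fL
    · have hfeq : f = fL := le_antisymm h1 hf.1
      simp [h1, hfeq]
      ring
    · simp only [h1, if_false, hf.2, if_true]
  have hL : Set.EqOn g (fun f => (Tc / 2) * (1 + Real.cos (k * (-f - fL)))) (Set.uIcc (-fH) (-fL)) := by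
    intro f hf
    rw [Set.uIcc_of_le (by linarith)] at hf
    have habs : |f| = -f := abs_of_nonpos (by linarith [hf.2])
    rw [hg f, habs]
    by_cases h1 : -f ≤ fL
    · have hfeq : -f = fL := le_antisymm h1 (by linarith [hf.2])
      simp [h1, hfeq]
      ring
    · have h2 : -f ≤ fH := by linarith [hf.1]
      simp only [h1, if_false, h2, if_true]
  -- EqOn for weighted integrand
  have hM2 : Set.EqOn (fun f => f ^ 2 * g f) (fun f => f ^ 2 * Tc) (Set.uIcc (-fL) fL) :=
    fun f hf => by simp only [hM hf]
  have hR2 : Set.EqOn (fun f => f ^ 2 * g f)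
      (fun f => f ^ 2 * ((Tc / 2) * (1 + Real.cos (k * (f - fL))))) (Set.uIcc fL fH) :=
    fun f hf => by simp only [hR hf]
  have hL2 : Set.EqOn (fun f => f ^ 2 * g f)
      (fun f => f ^ 2 * ((Tc / 2) * (1 + Real.cos (k * (-f - fL))))) (Set.uIcc (-fH) (-fL)) :=
    fun f hf => by simp only [hL hf]
  -- Continuity of the model functions
  have c1 : Continuous fun f : ℝ => (Tc / 2) * (1 + Real.cos (k * (f - fL))) := by fun_prop
  have c2 : Continuous fun f : ℝ => (Tc / 2) * (1 + Real.cos (k * (-f - fL))) := by fun_prop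
  -- Interval integrability of g and f^2 * g on each piece
  have igL : IntervalIntegrable g volume (-fH) (-fL) :=
    (c2.continuousOn.congr hL).intervalIntegrable
  have igM : IntervalIntegrable g volume (-fL) fL :=
    (continuousOn_const.congr hM).intervalIntegrable
  have igR : IntervalIntegrable g volume fL fH :=
    (c1.continuousOn.congr hR).intervalIntegrable
  have ig2L : IntervalIntegrable (fun f => f ^ 2 * g f) volume (-fH) (-fL) :=
    ((((continuous_pow 2).mul c2).continuousOn).congr hL2).intervalIntegrable
  have ig2M : IntervalIntegrable (fun f => f ^ 2 * g f) volume (-fL) fL :=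
    ((((continuous_pow 2).mul continuous_const).continuousOn).congr hM2).intervalIntegrable
  have ig2R : IntervalIntegrable (fun f => f ^ 2 * g f) volume fL fH :=
    ((((continuous_pow 2).mul c1).continuousOn).congr hR2).intervalIntegrable
  -- support of g (and f^2 * g) is inside Icc (-fH) fH
  have hsupp : ∀ f, f ∉ Set.Icc (-fH) fH → g f = 0 := by
    intro f hf
    simp only [Set.mem_Icc, not_and_or, not_le] at hf
    have habs : fH < |f| := by
      rcases hf with h | h
      · rw [abs_of_nonpos (by linarith)]; linarith
      · rw [abs_of_nonneg (by linarith)]; linarith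
    rw [hg f]
    rw [if_neg (by linarith), if_neg (by linarith)]
  -- splitting lemma
  have hsplit : ∀ F : ℝ → ℝ, (∀ f, g f = 0 → F f = 0) →
      IntervalIntegrable F volume (-fH) (-fL) → IntervalIntegrable F volume (-fL) fL →
      IntervalIntegrable F volume fL fH →
      (∫ f : ℝ, F f) = (∫ f in (-fH)..(-fL), F f) + (∫ f in (-fL)..fL, F f)
        + (∫ f in fL..fH, F f) := by
    intro F h0 i1 i2 i3
    have : (∫ f : ℝ, F f) = ∫ f in Set.Icc (-fH) fH, F f := by
      rw [setIntegral_eq_integral_of_forall_compl_eq_zero (fun x hx => h0 x (hsupp x hx))]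
    rw [this, integral_Icc_eq_integral_Ioc,
      ← intervalIntegral.integral_of_le (by linarith : -fH ≤ fH),
      ← intervalIntegral.integral_add_adjacent_intervals (i1.trans i2) i3,
      ← intervalIntegral.integral_add_adjacent_intervals i1 i2]
  -- FTC evaluations on the right piece
  have IR1 : (∫ f in fL..fH, (Tc / 2) * (1 + Real.cos (k * (f - fL)))) = (Tc / 2) * (fH - fL) := by
    have hder : ∀ f ∈ Set.uIcc fL fH,
        HasDerivAt (fun x => (Tc / 2) * (x + Real.sin (k * (x - fL)) / k))
          ((Tc / 2) * (1 + Real.cos (k * (f - fL)))) f := by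
      intro f _
      have h1 : HasDerivAt (fun x : ℝ => k * (x - fL)) k f := by
        simpa using ((hasDerivAt_id f).sub_const fL).const_mul k
      have h2 : HasDerivAt (fun x : ℝ => Real.sin (k * (x - fL)))
          (Real.cos (k * (f - fL)) * k) f := (Real.hasDerivAt_sin _).comp f h1
      have h3 := ((hasDerivAt_id f).add (h2.div_const k)).const_mul (Tc / 2)
      refine h3.congr_deriv ?_
      field_simp
    rw [intervalIntegral.integral_eq_sub_of_hasDerivAt hder (c1.intervalIntegrable _ _)]
    have e1 : k * (fH - fL) = π := hkπ
    have e2 : k * (fL - fL) = 0 := by ring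
    rw [e1, e2, Real.sin_pi, Real.sin_zero]
    ring
  have IR2 : (∫ f in fL..fH, f ^ 2 * ((Tc / 2) * (1 + Real.cos (k * (f - fL)))))
      = (Tc / 2) * ((fH ^ 3 - fL ^ 3) / 3 - 2 * (fH + fL) / k ^ 2) := by
    have hder : ∀ f ∈ Set.uIcc fL fH,
        HasDerivAt (fun x => (Tc / 2) * (x ^ 3 / 3 + x ^ 2 * Real.sin (k * (x - fL)) / k
          + 2 * x * Real.cos (k * (x - fL)) / k ^ 2 - 2 * Real.sin (k * (x - fL)) / k ^ 3))
          (f ^ 2 * ((Tc / 2) * (1 + Real.cos (k * (f - fL))))) f := by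
      intro f _
      have h1 : HasDerivAt (fun x : ℝ => k * (x - fL)) k f := by
        simpa using ((hasDerivAt_id f).sub_const fL).const_mul k
      have hs : HasDerivAt (fun x : ℝ => Real.sin (k * (x - fL)))
          (Real.cos (k * (f - fL)) * k) f := (Real.hasDerivAt_sin _).comp f h1
      have hc : HasDerivAt (fun x : ℝ => Real.cos (k * (x - fL)))
          (-Real.sin (k * (f - fL)) * k) f := (Real.hasDerivAt_cos _).comp f h1
      have t1 : HasDerivAt (fun x : ℝ => x ^ 3 / 3) ((3 : ℕ) * f ^ 2 / 3) f :=
        (hasDerivAt_pow 3 f).div_const 3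
      have t2 : HasDerivAt (fun x : ℝ => x ^ 2 * Real.sin (k * (x - fL)) / k)
          (((2 : ℕ) * f ^ 1 * Real.sin (k * (f - fL)) + f ^ 2 * (Real.cos (k * (f - fL)) * k)) / k)
          f := ((hasDerivAt_pow 2 f).mul hs).div_const k
      have t3 : HasDerivAt (fun x : ℝ => 2 * x * Real.cos (k * (x - fL)) / k ^ 2)
          ((2 * Real.cos (k * (f - fL)) + 2 * f * (-Real.sin (k * (f - fL)) * k)) / k ^ 2) f := by
        have : HasDerivAt (fun x : ℝ => 2 * x) 2 f := by
          simpa using (hasDerivAt_id f).const_mul 2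
        exact (this.mul hc).div_const (k ^ 2)
      have t4 : HasDerivAt (fun x : ℝ => 2 * Real.sin (k * (x - fL)) / k ^ 3)
          (2 * (Real.cos (k * (f - fL)) * k) / k ^ 3) f := (hs.const_mul 2).div_const (k ^ 3)
      have h3 := (((t1.add t2).add t3).sub t4).const_mul (Tc / 2)
      refine h3.congr_deriv ?_
      field_simp
      ring
    rw [intervalIntegral.integral_eq_sub_of_hasDerivAt hder
      (((continuous_pow 2).mul c1).intervalIntegrable _ _)]
    have e1 : k * (fH - fL) = π := hkπ
    have e2 : k * (fL - fL) = 0 := by ring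
    rw [e1, e2, Real.sin_pi, Real.sin_zero, Real.cos_pi, Real.cos_zero]
    field_simp
    ring
  -- left pieces via reflection
  have IL1 : (∫ f in (-fH)..(-fL), (Tc / 2) * (1 + Real.cos (k * (-f - fL))))
      = (Tc / 2) * (fH - fL) := by
    have := intervalIntegral.integral_comp_neg (a := -fH) (b := -fL)
      (fun f => (Tc / 2) * (1 + Real.cos (k * (f - fL))))
    simp only [neg_neg] at this
    rw [this, IR1]
  have IL2 : (∫ f in (-fH)..(-fL), f ^ 2 * ((Tc / 2) * (1 + Real.cos (k * (-f - fL)))))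
      = (Tc / 2) * ((fH ^ 3 - fL ^ 3) / 3 - 2 * (fH + fL) / k ^ 2) := by
    have := intervalIntegral.integral_comp_neg (a := -fH) (b := -fL)
      (fun f => f ^ 2 * ((Tc / 2) * (1 + Real.cos (k * (f - fL)))))
    simp only [neg_neg, even_two.neg_pow] at this
    rw [← IR2, ← this]
  -- middle pieces
  have IM1 : (∫ f in (-fL)..fL, g f) = 2 * fL * Tc := by
    rw [intervalIntegral.integral_congr hM, intervalIntegral.integral_const]
    rw [smul_eq_mul]; ring
  have IM2 : (∫ f in (-fL)..fL, f ^ 2 * g f) = 2 * fL ^ 3 / 3 * Tc := by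
    rw [intervalIntegral.integral_congr hM2]
    rw [intervalIntegral.integral_mul_const, integral_pow]
    ring
  constructor
  · rw [hsplit g (fun f h => h) igL igM igR,
      intervalIntegral.integral_congr hL, intervalIntegral.integral_congr hR, IL1, IR1, IM1]
    rw [hfL, hfH]
    field_simp
    ring
  · rw [hsplit (fun f => f ^ 2 * g f) (fun f h => by simp [h]) ig2L ig2M ig2R,
      intervalIntegral.integral_congr hL2, intervalIntegral.integral_congr hR2, IL2, IR2, IM2]
    rw [hk, hfL, hfH]
    have h2 : π ^ 2 ≠ 0 := pow_ne_zero 2 hπ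
    field_simp
    ring
end

section
/- Let T_c > 0 and 0 < α ≤ 1, and set f_L = (1−α)/(2T_c) and f_H = (1+α)/(2T_c). Define h : ℝ → ℝ by h(f) = T_c² if |f| ≤ f_L; h(f) = (T_c²/4)·(1 + cos((π T_c/α)·(|f| − f_L)))² if f_L < |f| ≤ f_H; and h(f) = 0 otherwise. Then ∫_ℝ h(f) df = T_c·(1 − α/4) and ∫_ℝ f²·h(f) df = ((6−π²)·α³ + (12π² − 96)·α² − 3π²·α + 4π²)/(48 π² T_c). -/
set_option maxHeartbeats 1000000

open MeasureTheory Real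

private lemma lin_deriv (m c x : ℝ) :
    HasDerivAt (fun f : ℝ => m * (f - c)) m x := by
  simpa using ((hasDerivAt_id x).sub_const c).const_mul m

private lemma SL (m c : ℝ) (hm : m ≠ 0) (x : ℝ) :
    HasDerivAt (fun f : ℝ => Real.sin (m * (f - c)) / m) (Real.cos (m * (x - c))) x := by
  have := (lin_deriv m c x).sin.div_const m
  refine this.congr_deriv (Eq.symm ?_)
  field_simp

private lemma SQ (m c : ℝ) (hm : m ≠ 0) (x : ℝ) :
    HasDerivAt (fun f : ℝ =>
      Real.sin (m * (f - c)) * (f ^ 2 / m) +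
        (Real.cos (m * (f - c)) * (2 * f / m ^ 2) - Real.sin (m * (f - c)) * (2 / m ^ 3)))
      (x ^ 2 * Real.cos (m * (x - c))) x := by
  have hl := lin_deriv m c x
  have hs := hl.sin
  have hcc := hl.cos
  have h1 : HasDerivAt (fun f : ℝ => f ^ 2 / m) (2 * x / m) x := by
    simpa using (hasDerivAt_pow 2 x).div_const m
  have h2 : HasDerivAt (fun f : ℝ => 2 * f / m ^ 2) (2 / m ^ 2) x := by
    simpa using ((hasDerivAt_id x).const_mul 2).div_const (m ^ 2)
  have sum := (hs.mul h1).add ((hcc.mul h2).sub (hs.mul_const (2 / m ^ 3)))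
  refine sum.congr_deriv (Eq.symm ?_)
  field_simp
  ring

/-- **RC power spectrum.** For the raised-cosine power spectrum `h` with
chip duration `T_c > 0` and roll-off `0 < α ≤ 1`, one has `∫ h = T_c (1 − α/4)` and
`∫ f² h(f) df = ((6−π²)α³ + (12π² − 96)α² − 3π² α + 4π²)/(48 π² T_c)`. -/
theorem stmt18 (Tc α : ℝ) (hTc : 0 < Tc) (hα0 : 0 < α) (hα1 : α ≤ 1)
    (fL fH : ℝ) (hfL : fL = (1 - α) / (2 * Tc)) (hfH : fH = (1 + α) / (2 * Tc))
    (h : ℝ → ℝ)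
    (hh : ∀ f : ℝ, h f =
      if |f| ≤ fL then Tc ^ 2
      else if |f| ≤ fH then (Tc ^ 2 / 4) * (1 + Real.cos ((π * Tc / α) * (|f| - fL))) ^ 2
      else 0) :
    (∫ f : ℝ, h f) = Tc * (1 - α / 4) ∧
    (∫ f : ℝ, f ^ 2 * h f) =
      ((6 - π ^ 2) * α ^ 3 + (12 * π ^ 2 - 96) * α ^ 2 - 3 * π ^ 2 * α + 4 * π ^ 2) /
        (48 * π ^ 2 * Tc) := by
  have hπ : (0:ℝ) < π := Real.pi_pos
  set k := π * Tc / α with hk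
  have hk0 : 0 < k := div_pos (mul_pos hπ hTc) hα0
  have hfL0 : 0 ≤ fL := by
    rw [hfL]; exact div_nonneg (by linarith) (by linarith)
  have hLH : fL ≤ fH := by
    have h2 : (0:ℝ) < 2 * Tc := by linarith
    rw [hfL, hfH, div_le_div_iff₀ h2 h2]
    nlinarith
  have hfH0 : 0 < fH := by
    rw [hfH]; positivity
  have hTc' : Tc ≠ 0 := hTc.ne'
  have hα' : α ≠ 0 := hα0.ne'
  have hk' : k ≠ 0 := hk0.ne'
  have hkHL : k * (fH - fL) = π := by
    rw [hk, hfL, hfH]; field_simp; ring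
  have hs1 : Real.sin (k * (fH - fL)) = 0 := by rw [hkHL]; exact Real.sin_pi
  have hs2 : Real.sin (2 * k * (fH - fL)) = 0 := by
    rw [mul_assoc, hkHL]; exact Real.sin_two_pi
  have hc1 : Real.cos (k * (fH - fL)) = -1 := by rw [hkHL]; exact Real.cos_pi
  have hc2 : Real.cos (2 * k * (fH - fL)) = 1 := by
    rw [mul_assoc, hkHL]; exact Real.cos_two_pi
  -- evenness
  have heven : ∀ x : ℝ, h (-x) = h x := by
    intro x; rw [hh, hh, abs_neg]
  -- formulas on pieces
  have heq1 : Set.EqOn h (fun _ => Tc ^ 2) (Set.uIcc (-fL) fL) := by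
    intro x hx
    rw [Set.uIcc_of_le (by linarith)] at hx
    rw [hh, if_pos (abs_le.mpr ⟨hx.1, hx.2⟩)]
  have heq2 : Set.EqOn h (fun x => (Tc ^ 2 / 4) * (1 + Real.cos (k * (x - fL))) ^ 2)
      (Set.uIcc fL fH) := by
    intro x hx
    rw [Set.uIcc_of_le hLH] at hx
    have hx0 : 0 ≤ x := le_trans hfL0 hx.1
    rw [hh, abs_of_nonneg hx0]
    by_cases hc : x ≤ fL
    · have hxe : x = fL := le_antisymm hc hx.1
      rw [if_pos hc, hxe]
      norm_num
    · rw [if_neg hc, if_pos hx.2]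
  have heq0 : Set.EqOn h (fun x => (Tc ^ 2 / 4) * (1 + Real.cos (k * (-x - fL))) ^ 2)
      (Set.uIcc (-fH) (-fL)) := by
    intro x hx
    rw [Set.uIcc_of_le (by linarith)] at hx
    have hmem : -x ∈ Set.uIcc fL fH := by
      rw [Set.uIcc_of_le hLH]; exact ⟨by linarith [hx.2], by linarith [hx.1]⟩
    have h1 := heq2 hmem
    rw [heven x] at h1
    simpa using h1
  -- integrability
  have cform : Continuous (fun x : ℝ => (Tc ^ 2 / 4) * (1 + Real.cos (k * (x - fL))) ^ 2) := by
    fun_prop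
  have cform0 : Continuous (fun x : ℝ => (Tc ^ 2 / 4) * (1 + Real.cos (k * (-x - fL))) ^ 2) := by
    fun_prop
  have int2 : IntervalIntegrable h volume fL fH :=
    (cform.continuousOn.congr heq2).intervalIntegrable
  have int1 : IntervalIntegrable h volume (-fL) fL :=
    (continuous_const.continuousOn.congr heq1).intervalIntegrable
  have int0 : IntervalIntegrable h volume (-fH) (-fL) :=
    (cform0.continuousOn.congr heq0).intervalIntegrable
  have csq : Continuous (fun x : ℝ => x ^ 2) := by fun_prop
  have int2' : IntervalIntegrable (fun x => x ^ 2 * h x) volume fL fH :=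
    ((csq.continuousOn.mul (cform.continuousOn.congr heq2))).intervalIntegrable
  have int1' : IntervalIntegrable (fun x => x ^ 2 * h x) volume (-fL) fL :=
    ((csq.continuousOn.mul (continuous_const.continuousOn.congr heq1))).intervalIntegrable
  have int0' : IntervalIntegrable (fun x => x ^ 2 * h x) volume (-fH) (-fL) :=
    ((csq.continuousOn.mul (cform0.continuousOn.congr heq0))).intervalIntegrable
  -- support reduction
  have hsupp : ∀ x : ℝ, x ∉ Set.Icc (-fH) fH → h x = 0 := by
    intro x hx
    have habs : fH < |x| := by
      simp only [Set.mem_Icc, not_and_or, not_le] at hx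
      rcases hx with h1 | h2
      · exact lt_abs.mpr (Or.inr (by linarith))
      · exact lt_abs.mpr (Or.inl h2)
    rw [hh, if_neg (by push_neg; linarith), if_neg (by push_neg; linarith)]
  have hline : (∫ f : ℝ, h f) = ∫ x in (-fH)..fH, h x := by
    rw [← setIntegral_eq_integral_of_forall_compl_eq_zero hsupp,
      integral_Icc_eq_integral_Ioc, ← intervalIntegral.integral_of_le (by linarith)]
  have hline' : (∫ f : ℝ, f ^ 2 * h f) = ∫ x in (-fH)..fH, x ^ 2 * h x := by
    rw [← setIntegral_eq_integral_of_forall_compl_eq_zero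
        (fun x hx => by rw [hsupp x hx, mul_zero]),
      integral_Icc_eq_integral_Ioc, ← intervalIntegral.integral_of_le (by linarith)]
  -- negative-side reduction
  have hneg1 : ∫ x in (-fH)..(-fL), h x = ∫ x in fL..fH, h x := by
    rw [← intervalIntegral.integral_comp_neg (a := fL) (b := fH) (f := h)]
    exact intervalIntegral.integral_congr fun x _ => heven x
  have hneg2 : ∫ x in (-fH)..(-fL), x ^ 2 * h x = ∫ x in fL..fH, x ^ 2 * h x := by
    rw [← intervalIntegral.integral_comp_neg (a := fL) (b := fH) (f := fun x => x ^ 2 * h x)]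
    refine intervalIntegral.integral_congr fun x _ => ?_
    simp [heven x, neg_sq]
  -- FTC pieces
  have hG : ∀ x ∈ Set.uIcc fL fH,
      HasDerivAt (fun f : ℝ => (Tc ^ 2 / 4) * ((3 / 2) * f + 2 * (Real.sin (k * (f - fL)) / k)
        + (1 / 2) * (Real.sin (2 * k * (f - fL)) / (2 * k))))
      ((Tc ^ 2 / 4) * (1 + Real.cos (k * (x - fL))) ^ 2) x := by
    intro x _
    have d0 : HasDerivAt (fun f : ℝ => (3 / 2 : ℝ) * f) (3 / 2) x := by
      simpa using (hasDerivAt_id x).const_mul (3 / 2 : ℝ)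
    have d1 := (SL k fL hk' x).const_mul (2 : ℝ)
    have d2 := (SL (2 * k) fL (by positivity) x).const_mul (1 / 2 : ℝ)
    have sum := ((d0.add d1).add d2).const_mul (Tc ^ 2 / 4)
    refine sum.congr_deriv (Eq.symm ?_)
    have hcd : Real.cos (2 * k * (x - fL)) = 2 * Real.cos (k * (x - fL)) ^ 2 - 1 := by
      rw [mul_assoc]; exact Real.cos_two_mul _
    rw [hcd]; ring
  have hB : ∫ x in fL..fH, (Tc ^ 2 / 4) * (1 + Real.cos (k * (x - fL))) ^ 2 = 3 * Tc * α / 8 := by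
    rw [intervalIntegral.integral_eq_sub_of_hasDerivAt hG (cform.intervalIntegrable _ _)]
    simp only [sub_self, mul_zero, Real.sin_zero, hs1, hs2, zero_div]
    rw [hfL, hfH]
    field_simp
    ring
  have hB' : ∫ x in fL..fH, h x = 3 * Tc * α / 8 := by
    rw [intervalIntegral.integral_congr heq2]; exact hB
  have hF : ∀ x ∈ Set.uIcc fL fH,
      HasDerivAt (fun f : ℝ => (Tc ^ 2 / 4) * (f ^ 3 / 2
        + 2 * (Real.sin (k * (f - fL)) * (f ^ 2 / k) +
            (Real.cos (k * (f - fL)) * (2 * f / k ^ 2) - Real.sin (k * (f - fL)) * (2 / k ^ 3)))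
        + (1 / 2) * (Real.sin (2 * k * (f - fL)) * (f ^ 2 / (2 * k)) +
            (Real.cos (2 * k * (f - fL)) * (2 * f / (2 * k) ^ 2)
              - Real.sin (2 * k * (f - fL)) * (2 / (2 * k) ^ 3)))))
      (x ^ 2 * ((Tc ^ 2 / 4) * (1 + Real.cos (k * (x - fL))) ^ 2)) x := by
    intro x _
    have p3 : HasDerivAt (fun f : ℝ => f ^ 3 / 2) (3 * x ^ 2 / 2) x := by
      simpa using (hasDerivAt_pow 3 x).div_const 2
    have q1 := (SQ k fL hk' x).const_mul (2 : ℝ)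
    have q2 := (SQ (2 * k) fL (by positivity) x).const_mul (1 / 2 : ℝ)
    have sum := ((p3.add q1).add q2).const_mul (Tc ^ 2 / 4)
    refine sum.congr_deriv (Eq.symm ?_)
    have hcd : Real.cos (2 * k * (x - fL)) = 2 * Real.cos (k * (x - fL)) ^ 2 - 1 := by
      rw [mul_assoc]; exact Real.cos_two_mul _
    rw [hcd]; ring
  have hD : ∫ x in fL..fH, x ^ 2 * ((Tc ^ 2 / 4) * (1 + Real.cos (k * (x - fL))) ^ 2)
      = (Tc ^ 2 / 4) * ((fH ^ 3 - fL ^ 3) / 2 - 4 * (fH + fL) / k ^ 2 + (fH - fL) / (4 * k ^ 2)) := by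
    rw [intervalIntegral.integral_eq_sub_of_hasDerivAt hF
      ((csq.mul cform).intervalIntegrable _ _)]
    simp only [sub_self, mul_zero, Real.sin_zero, Real.cos_zero, hs1, hs2, hc1, hc2]
    field_simp
    ring
  have hD' : ∫ x in fL..fH, x ^ 2 * h x
      = (Tc ^ 2 / 4) * ((fH ^ 3 - fL ^ 3) / 2 - 4 * (fH + fL) / k ^ 2 + (fH - fL) / (4 * k ^ 2)) := by
    rw [← hD]
    exact intervalIntegral.integral_congr fun x hx => congrArg (fun t => x ^ 2 * t) (heq2 hx)
  -- constant middle pieces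
  have hA : ∫ x in (-fL)..fL, h x = 2 * fL * Tc ^ 2 := by
    rw [intervalIntegral.integral_congr heq1, intervalIntegral.integral_const, smul_eq_mul]
    ring
  have hC : ∫ x in (-fL)..fL, x ^ 2 * h x = 2 * fL ^ 3 * Tc ^ 2 / 3 := by
    have : Set.EqOn (fun x => x ^ 2 * h x) (fun x => x ^ 2 * Tc ^ 2) (Set.uIcc (-fL) fL) :=
      fun x hx => congrArg (fun t => x ^ 2 * t) (heq1 hx)
    rw [intervalIntegral.integral_congr this, intervalIntegral.integral_mul_const,
      integral_pow]
    norm_num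
    ring
  -- splits
  have split1 := intervalIntegral.integral_add_adjacent_intervals int0 int1
  have split2 := intervalIntegral.integral_add_adjacent_intervals (int0.trans int1) int2
  have split1' := intervalIntegral.integral_add_adjacent_intervals int0' int1'
  have split2' := intervalIntegral.integral_add_adjacent_intervals (int0'.trans int1') int2'
  constructor
  · rw [hline, ← split2, ← split1, hneg1, hA, hB', hfL]
    field_simp
    ring
  · rw [hline', ← split2', ← split1', hneg2, hC, hD', hfL, hfH, hk]
    field_simp
    ring
end
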